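/- arXiv:2004.06330 — 2 statements merged into one kernel-verified Lean document; each statement's English description precedes it below -/
import Mathlib

section
/- Under the standing assumptions on W, V, Π, C, H, d, there exists a constant c₁ > 0, independent of γ and z, such that for every γ > 0, every z ∈ ℝ, and all E₁, E₂ ∈ W: ‖b_{z,γ}(E₁) − b_{z,γ}(E₂)‖ ≤ c₁ ‖E₁ − E₂‖, where b_{z,γ}(E) = C(z)(E − F_{z,γ}^{-1}(Π(C(z)E))). -/
open scoped RealInnerProductSpace

/-- Cauchy–Schwarz for a positive symmetric operator. -/
lemma pos_op_cs {W : Type*} [NormedAddCommGroup W] [InnerProductSpace ℝ W]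
    (P : W →ₗ[ℝ] W) (hsym : ∀ x y : W, ⟪P x, y⟫ = ⟪x, P y⟫)
    (hpos : ∀ x : W, 0 ≤ ⟪P x, x⟫) (x y : W) :
    ⟪P x, y⟫ ^ 2 ≤ ⟪P x, x⟫ * ⟪P y, y⟫ := by
  have h : ∀ t : ℝ, 0 ≤ ⟪P y, y⟫ * (t * t) + (2 * ⟪P x, y⟫) * t + ⟪P x, x⟫ := by
    intro t
    have h0 := hpos (x + t • y)
    have hyx : ⟪P y, x⟫ = ⟪P x, y⟫ := by
      rw [hsym y x, real_inner_comm]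
    simp only [map_add, map_smul, inner_add_left, inner_add_right, inner_smul_left,
      inner_smul_right, RCLike.conj_to_real, hyx] at h0
    nlinarith [h0]
  have := discrim_le_zero h
  rw [discrim] at this
  nlinarith [this]

lemma pos_op_norm_le {W : Type*} [NormedAddCommGroup W] [InnerProductSpace ℝ W]
    (P : W →ₗ[ℝ] W) (hsym : ∀ x y : W, ⟪P x, y⟫ = ⟪x, P y⟫)
    (hpos : ∀ x : W, 0 ≤ ⟪P x, x⟫) (β : ℝ)
    (hub : ∀ x : W, ⟪P x, x⟫ ≤ β * ‖x‖ ^ 2) (hβ : 0 ≤ β) (x : W) :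
    ‖P x‖ ≤ β * ‖x‖ := by
  have hcs := pos_op_cs P hsym hpos x (P x)
  rw [real_inner_self_eq_norm_sq] at hcs
  have h1 := hub x
  have h2 := hub (P x)
  by_cases hz : ‖P x‖ = 0
  · rw [hz]; positivity
  · have hz' : 0 < ‖P x‖ := lt_of_le_of_ne (norm_nonneg _) (Ne.symm hz)
    have ha : ‖P x‖ ^ 2 * ‖P x‖ ^ 2 ≤ (β * ‖x‖ ^ 2) * (β * ‖P x‖ ^ 2) := by
      calc ‖P x‖ ^ 2 * ‖P x‖ ^ 2 = (‖P x‖ ^ 2) ^ 2 := by ring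
        _ ≤ ⟪P x, x⟫ * ⟪P (P x), P x⟫ := hcs
        _ ≤ (β * ‖x‖ ^ 2) * (β * ‖P x‖ ^ 2) :=
            mul_le_mul h1 h2 (hpos _) (by positivity)
    have hb : ‖P x‖ ^ 2 ≤ β ^ 2 * ‖x‖ ^ 2 := by
      nlinarith [mul_pos hz' hz']
    nlinarith [mul_nonneg hβ (norm_nonneg x), hz']

/-- Monotonicity of `Q ↦ Q / √(‖Q‖² + c)` for `c > 0`. -/
lemma grad_h_mono {W : Type*} [NormedAddCommGroup W] [InnerProductSpace ℝ W]
    (c : ℝ) (hc : 0 < c) (x y : W) :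
    0 ≤ ⟪(Real.sqrt (‖x‖ ^ 2 + c))⁻¹ • x - (Real.sqrt (‖y‖ ^ 2 + c))⁻¹ • y, x - y⟫ := by
  set u := ‖x‖ with hu
  set v := ‖y‖ with hv
  set s := Real.sqrt (u ^ 2 + c) with hsdef
  set t := Real.sqrt (v ^ 2 + c) with htdef
  have hs2 : s ^ 2 = u ^ 2 + c := Real.sq_sqrt (by positivity)
  have ht2 : t ^ 2 = v ^ 2 + c := Real.sq_sqrt (by positivity)
  have hs0 : 0 < s := Real.sqrt_pos.2 (by positivity)
  have ht0 : 0 < t := Real.sqrt_pos.2 (by positivity)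
  have hu0 : 0 ≤ u := norm_nonneg x
  have hv0 : 0 ≤ v := norm_nonneg y
  have hp : ⟪x, y⟫ ≤ u * v := real_inner_le_norm x y
  have hexp : ⟪(s⁻¹ : ℝ) • x - (t⁻¹ : ℝ) • y, x - y⟫ =
      s⁻¹ * u ^ 2 + t⁻¹ * v ^ 2 - ⟪x, y⟫ * (s⁻¹ + t⁻¹) := by
    simp only [inner_sub_left, inner_sub_right, real_inner_smul_left,
      real_inner_self_eq_norm_sq, real_inner_comm y x, ← hu, ← hv]
    ring
  rw [hexp]
  clear_value s t u v
  clear hsdef htdef hu hv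
  have key : 0 ≤ t * u ^ 2 + s * v ^ 2 - ⟪x, y⟫ * (t + s) := by
    have hb : ⟪x, y⟫ * (t + s) ≤ u * v * (t + s) :=
      mul_le_mul_of_nonneg_right hp (by positivity)
    have hsign : 0 ≤ (v - u) * (s * v - t * u) := by
      rcases le_total u v with h | h
      · have huv2 : u ^ 2 ≤ v ^ 2 := by nlinarith
        have hsq : (t * u) ^ 2 ≤ (s * v) ^ 2 := by
          nlinarith [mul_le_mul_of_nonneg_left huv2 hc.le]
        have h3 : t * u ≤ s * v := by
          have := Real.sqrt_le_sqrt hsq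
          rwa [Real.sqrt_sq (by positivity), Real.sqrt_sq (by positivity)] at this
        nlinarith
      · have huv2 : v ^ 2 ≤ u ^ 2 := by nlinarith
        have hsq : (s * v) ^ 2 ≤ (t * u) ^ 2 := by
          nlinarith [mul_le_mul_of_nonneg_left huv2 hc.le]
        have h3 : s * v ≤ t * u := by
          have := Real.sqrt_le_sqrt hsq
          rwa [Real.sqrt_sq (by positivity), Real.sqrt_sq (by positivity)] at this
        nlinarith
    nlinarith
  have heq : s⁻¹ * u ^ 2 + t⁻¹ * v ^ 2 - ⟪x, y⟫ * (s⁻¹ + t⁻¹) =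
      (t * u ^ 2 + s * v ^ 2 - ⟪x, y⟫ * (t + s)) / (s * t) := by
    field_simp
  rw [heq]
  positivity

/-- There is a constant `c₁ > 0`, independent of `γ` and `z`, such that the map
`b_{z,γ}(E) = C(z)(E − F_{z,γ}⁻¹(Π(C(z)E)))` is `c₁`-Lipschitz on `W`. -/
theorem b_lipschitz
    {W : Type*} [NormedAddCommGroup W] [InnerProductSpace ℝ W] [FiniteDimensional ℝ W]
    (V : Submodule ℝ W)
    (C H : ℝ → W →ₗ[ℝ] W) (d : ℝ → ℝ)
    (αC βC αH βH αd βd LC LH Ld : ℝ)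
    (hαC : 0 < αC) (hβC : αC ≤ βC) (hαH : 0 < αH) (hβH : αH ≤ βH)
    (hαd : 0 < αd) (hβd : αd ≤ βd)
    (hCsym : ∀ (z : ℝ) (x y : W), ⟪C z x, y⟫ = ⟪x, C z y⟫)
    (hHsym : ∀ (z : ℝ) (x y : W), ⟪H z x, y⟫ = ⟪x, H z y⟫)
    (hClip : ∀ (z₁ z₂ : ℝ) (x : W), ‖C z₁ x - C z₂ x‖ ≤ LC * |z₁ - z₂| * ‖x‖)
    (hHlip : ∀ (z₁ z₂ : ℝ) (x : W), ‖H z₁ x - H z₂ x‖ ≤ LH * |z₁ - z₂| * ‖x‖)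
    (hdlip : ∀ z₁ z₂ : ℝ, |d z₁ - d z₂| ≤ Ld * |z₁ - z₂|)
    (hCbound : ∀ (z : ℝ) (x : W), αC * ‖x‖ ^ 2 ≤ ⟪C z x, x⟫ ∧ ⟪C z x, x⟫ ≤ βC * ‖x‖ ^ 2)
    (hHbound : ∀ (z : ℝ) (x : W), αH * ‖x‖ ^ 2 ≤ ⟪H z x, x⟫ ∧ ⟪H z x, x⟫ ≤ βH * ‖x‖ ^ 2)
    (hdbound : ∀ z : ℝ, αd ≤ d z ∧ d z ≤ βd)
    (hCV : ∀ (z : ℝ), ∀ x ∈ V, C z x ∈ V) (hHV : ∀ (z : ℝ), ∀ x ∈ V, H z x ∈ V)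
    (F : ℝ → ℝ → V → V)
    (hF : ∀ (z γ : ℝ) (Q : V), ((F z γ Q : W)) =
      C z (Q : W) + H z (Q : W) +
        (d z * (Real.sqrt (‖(Q : W)‖ ^ 2 + 1 / γ ^ 2))⁻¹) • (Q : W))
    (Finv : ℝ → ℝ → V → V)
    (hFinvL : ∀ (γ : ℝ), 0 < γ → ∀ z : ℝ, Function.LeftInverse (Finv z γ) (F z γ))
    (hFinvR : ∀ (γ : ℝ), 0 < γ → ∀ z : ℝ, Function.RightInverse (Finv z γ) (F z γ)) :
    ∃ c₁ > 0, ∀ (γ : ℝ), 0 < γ → ∀ (z : ℝ) (E₁ E₂ : W),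
      ‖C z (E₁ - ((Finv z γ (Submodule.orthogonalProjection V (C z E₁)) : V) : W)) -
          C z (E₂ - ((Finv z γ (Submodule.orthogonalProjection V (C z E₂)) : V) : W))‖
        ≤ c₁ * ‖E₁ - E₂‖ := by
  have hβC0 : 0 < βC := lt_of_lt_of_le hαC hβC
  have hα : 0 < αC + αH := by linarith
  refine ⟨βC * (1 + βC / (αC + αH)), by positivity, ?_⟩
  intro γ hγ z E₁ E₂
  -- operator norm bound for C z
  have hCnorm : ∀ x : W, ‖C z x‖ ≤ βC * ‖x‖ := by
    intro x
    refine pos_op_norm_le (C z) (hCsym z) (fun y => ?_) βC (fun y => (hCbound z y).2)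
      hβC0.le x
    have := (hCbound z y).1
    nlinarith [sq_nonneg ‖y‖]
  set P₁ : V := Submodule.orthogonalProjection V (C z E₁) with hP₁
  set P₂ : V := Submodule.orthogonalProjection V (C z E₂) with hP₂
  set Q₁ : V := Finv z γ P₁ with hQ₁
  set Q₂ : V := Finv z γ P₂ with hQ₂
  have hFQ₁ : F z γ Q₁ = P₁ := hFinvR γ hγ z P₁
  have hFQ₂ : F z γ Q₂ = P₂ := hFinvR γ hγ z P₂
  -- bound on ‖P₁ - P₂‖
  have hΔP : ‖(P₁ : W) - (P₂ : W)‖ ≤ βC * ‖E₁ - E₂‖ := by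
    have h1 : (P₁ : W) - (P₂ : W) = ((P₁ - P₂ : V) : W) := by norm_cast
    have h2 : P₁ - P₂ = Submodule.orthogonalProjection V (C z E₁ - C z E₂) := by
      rw [hP₁, hP₂, map_sub]
    rw [h1, h2]
    calc ‖((Submodule.orthogonalProjection V (C z E₁ - C z E₂) : V) : W)‖
        = ‖Submodule.orthogonalProjection V (C z E₁ - C z E₂)‖ := Submodule.norm_coe _
      _ ≤ ‖Submodule.orthogonalProjection V‖ * ‖C z E₁ - C z E₂‖ :=
          (Submodule.orthogonalProjection V).le_opNorm _
      _ ≤ 1 * ‖C z E₁ - C z E₂‖ := by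
          gcongr; exact Submodule.orthogonalProjectionOnto_norm_le V
      _ = ‖C z (E₁ - E₂)‖ := by rw [one_mul, map_sub]
      _ ≤ βC * ‖E₁ - E₂‖ := hCnorm _
  -- strong monotonicity of F
  set ΔQ : W := (Q₁ : W) - (Q₂ : W) with hΔQdef
  have hc : 0 < 1 / γ ^ 2 := by positivity
  have hmono : (αC + αH) * ‖ΔQ‖ ^ 2 ≤ ⟪(P₁ : W) - (P₂ : W), ΔQ⟫ := by
    have hsub : (P₁ : W) - (P₂ : W) = C z ΔQ + H z ΔQ +
        d z • ((Real.sqrt (‖(Q₁ : W)‖ ^ 2 + 1 / γ ^ 2))⁻¹ • (Q₁ : W) -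
          (Real.sqrt (‖(Q₂ : W)‖ ^ 2 + 1 / γ ^ 2))⁻¹ • (Q₂ : W)) := by
      have e1 : (P₁ : W) = ((F z γ Q₁ : V) : W) := by rw [hFQ₁]
      have e2 : (P₂ : W) = ((F z γ Q₂ : V) : W) := by rw [hFQ₂]
      rw [e1, e2, hF, hF, hΔQdef]
      simp only [map_sub, smul_sub, mul_smul]
      abel
    rw [hsub, inner_add_left, inner_add_left, real_inner_smul_left]
    have h1 := (hCbound z ΔQ).1
    have h2 := (hHbound z ΔQ).1
    have h3 : 0 ≤ ⟪(Real.sqrt (‖(Q₁ : W)‖ ^ 2 + 1 / γ ^ 2))⁻¹ • (Q₁ : W) -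
        (Real.sqrt (‖(Q₂ : W)‖ ^ 2 + 1 / γ ^ 2))⁻¹ • (Q₂ : W), ΔQ⟫ := by
      rw [hΔQdef]
      exact grad_h_mono (1 / γ ^ 2) hc (Q₁ : W) (Q₂ : W)
    have hd0 : 0 < d z := lt_of_lt_of_le hαd (hdbound z).1
    have h4 : 0 ≤ d z * ⟪(Real.sqrt (‖(Q₁ : W)‖ ^ 2 + 1 / γ ^ 2))⁻¹ • (Q₁ : W) -
        (Real.sqrt (‖(Q₂ : W)‖ ^ 2 + 1 / γ ^ 2))⁻¹ • (Q₂ : W), ΔQ⟫ :=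
      mul_nonneg hd0.le h3
    linarith
  -- Lipschitz bound for Finv
  have hΔQ : ‖ΔQ‖ ≤ βC / (αC + αH) * ‖E₁ - E₂‖ := by
    have hcs : ⟪(P₁ : W) - (P₂ : W), ΔQ⟫ ≤ ‖(P₁ : W) - (P₂ : W)‖ * ‖ΔQ‖ :=
      real_inner_le_norm _ _
    have hE0 : 0 ≤ ‖E₁ - E₂‖ := norm_nonneg _
    by_cases hz : ‖ΔQ‖ = 0
    · rw [hz]; positivity
    · have hz' : 0 < ‖ΔQ‖ := lt_of_le_of_ne (norm_nonneg _) (Ne.symm hz)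
      have key : (αC + αH) * ‖ΔQ‖ ^ 2 ≤ βC * ‖E₁ - E₂‖ * ‖ΔQ‖ :=
        le_trans hmono (le_trans hcs (mul_le_mul_of_nonneg_right hΔP (norm_nonneg _)))
      have key2 : (αC + αH) * ‖ΔQ‖ ≤ βC * ‖E₁ - E₂‖ := by
        refine le_of_mul_le_mul_right ?_ hz'
        calc (αC + αH) * ‖ΔQ‖ * ‖ΔQ‖ = (αC + αH) * ‖ΔQ‖ ^ 2 := by ring
          _ ≤ βC * ‖E₁ - E₂‖ * ‖ΔQ‖ := key
      rw [div_mul_eq_mul_div, le_div_iff₀ hα, mul_comm]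
      exact key2
  -- final bound
  have hgoal : C z (E₁ - (Q₁ : W)) - C z (E₂ - (Q₂ : W)) = C z ((E₁ - E₂) - ΔQ) := by
    rw [← map_sub, hΔQdef]
    congr 1
    abel
  rw [hgoal]
  calc ‖C z ((E₁ - E₂) - ΔQ)‖ ≤ βC * ‖(E₁ - E₂) - ΔQ‖ := hCnorm _
    _ ≤ βC * (‖E₁ - E₂‖ + ‖ΔQ‖) := by
        gcongr
        exact norm_sub_le _ _
    _ ≤ βC * (‖E₁ - E₂‖ + βC / (αC + αH) * ‖E₁ - E₂‖) := by gcongr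
    _ = βC * (1 + βC / (αC + αH)) * ‖E₁ - E₂‖ := by ring
end

section
/- Under the standing assumptions on W, V, Π, C, H, d, define for z ∈ ℝ and γ > 0 the map G_{z,γ} : W × V → W × V by G_{z,γ}(E, Q) = (C(z)(E − Q), F_{z,γ}(Q) − Π(C(z)E)). Then there exists a constant c > 0, independent of γ, z, E₁, E₂, Q₁, Q₂, such that ⟨G_{z,γ}(E₁, Q₁) − G_{z,γ}(E₂, Q₂), (E₁ − E₂, Q₁ − Q₂)⟩ ≥ c (‖E₁ − E₂‖² + ‖Q₁ − Q₂‖²) for all E₁, E₂ ∈ W and Q₁, Q₂ ∈ V, where the inner product on W × V is the product inner product. -/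
open scoped RealInnerProductSpace

lemma grad_mono {W : Type*} [NormedAddCommGroup W] [InnerProductSpace ℝ W]
    (a : ℝ) (ha : 0 < a) (x y : W) :
    0 ≤ ⟪(Real.sqrt (‖x‖ ^ 2 + a))⁻¹ • x - (Real.sqrt (‖y‖ ^ 2 + a))⁻¹ • y, x - y⟫ := by
  have hsx : 0 < Real.sqrt (‖x‖ ^ 2 + a) := Real.sqrt_pos.2 (by positivity)
  have hsy : 0 < Real.sqrt (‖y‖ ^ 2 + a) := Real.sqrt_pos.2 (by positivity)
  set sx := Real.sqrt (‖x‖ ^ 2 + a) with hsxdef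
  set sy := Real.sqrt (‖y‖ ^ 2 + a) with hsydef
  have mono : ∀ u v : ℝ, 0 ≤ u → u ≤ v →
      u / Real.sqrt (u ^ 2 + a) ≤ v / Real.sqrt (v ^ 2 + a) := by
    intro u v hu huv
    have hv : 0 ≤ v := hu.trans huv
    rw [div_le_div_iff₀ (Real.sqrt_pos.2 (by positivity)) (Real.sqrt_pos.2 (by positivity))]
    have h1 : u * Real.sqrt (v ^ 2 + a) = Real.sqrt (u ^ 2 * (v ^ 2 + a)) := by
      rw [Real.sqrt_mul (by positivity), Real.sqrt_sq hu]
    have h2 : v * Real.sqrt (u ^ 2 + a) = Real.sqrt (v ^ 2 * (u ^ 2 + a)) := by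
      rw [Real.sqrt_mul (by positivity), Real.sqrt_sq hv]
    rw [h1, h2]
    apply Real.sqrt_le_sqrt
    nlinarith [mul_nonneg ha.le (sub_nonneg.2 (pow_le_pow_left₀ hu huv 2))]
  have hprod : 0 ≤ (‖x‖ - ‖y‖) * (sx⁻¹ * ‖x‖ - sy⁻¹ * ‖y‖) := by
    rcases le_total ‖x‖ ‖y‖ with h | h
    · have := mono ‖x‖ ‖y‖ (norm_nonneg x) h
      rw [← hsxdef, ← hsydef, div_eq_inv_mul, div_eq_inv_mul] at this
      nlinarith
    · have := mono ‖y‖ ‖x‖ (norm_nonneg y) h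
      rw [← hsxdef, ← hsydef, div_eq_inv_mul, div_eq_inv_mul] at this
      nlinarith
  have hxy : ⟪x, y⟫ ≤ ‖x‖ * ‖y‖ := real_inner_le_norm x y
  have hyx : ⟪y, x⟫ ≤ ‖x‖ * ‖y‖ := by rw [real_inner_comm]; exact hxy
  have expand : ⟪sx⁻¹ • x - sy⁻¹ • y, x - y⟫
      = sx⁻¹ * ‖x‖ ^ 2 + sy⁻¹ * ‖y‖ ^ 2 - sx⁻¹ * ⟪x, y⟫ - sy⁻¹ * ⟪y, x⟫ := by
    simp only [inner_sub_left, inner_sub_right, real_inner_smul_left,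
      real_inner_self_eq_norm_sq]
    ring
  rw [expand]
  have hsxi : 0 < sx⁻¹ := inv_pos.2 hsx
  have hsyi : 0 < sy⁻¹ := inv_pos.2 hsy
  nlinarith [hprod, mul_le_mul_of_nonneg_left hxy hsxi.le, mul_le_mul_of_nonneg_left hyx hsyi.le]

/-- Strong monotonicity of the auxiliary map
`G_{z,γ}(E, Q) = (C(z)(E − Q), F_{z,γ}(Q) − Π(C(z)E))` on `W × V` (with the product inner
product, written out componentwise): there is `c > 0` independent of `γ`, `z`, and of the
points, such that
`⟪G_{z,γ}(E₁,Q₁) − G_{z,γ}(E₂,Q₂), (E₁ − E₂, Q₁ − Q₂)⟫ ≥ c(‖E₁ − E₂‖² + ‖Q₁ − Q₂‖²)`. -/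
theorem G_strongly_monotone
    {W : Type*} [NormedAddCommGroup W] [InnerProductSpace ℝ W] [FiniteDimensional ℝ W]
    (V : Submodule ℝ W)
    (C H : ℝ → W →ₗ[ℝ] W) (d : ℝ → ℝ)
    (αC βC αH βH αd βd LC LH Ld : ℝ)
    (hαC : 0 < αC) (hβC : αC ≤ βC) (hαH : 0 < αH) (hβH : αH ≤ βH)
    (hαd : 0 < αd) (hβd : αd ≤ βd)
    (hCsym : ∀ (z : ℝ) (x y : W), ⟪C z x, y⟫ = ⟪x, C z y⟫)
    (hHsym : ∀ (z : ℝ) (x y : W), ⟪H z x, y⟫ = ⟪x, H z y⟫)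
    (hClip : ∀ (z₁ z₂ : ℝ) (x : W), ‖C z₁ x - C z₂ x‖ ≤ LC * |z₁ - z₂| * ‖x‖)
    (hHlip : ∀ (z₁ z₂ : ℝ) (x : W), ‖H z₁ x - H z₂ x‖ ≤ LH * |z₁ - z₂| * ‖x‖)
    (hdlip : ∀ z₁ z₂ : ℝ, |d z₁ - d z₂| ≤ Ld * |z₁ - z₂|)
    (hCbound : ∀ (z : ℝ) (x : W), αC * ‖x‖ ^ 2 ≤ ⟪C z x, x⟫ ∧ ⟪C z x, x⟫ ≤ βC * ‖x‖ ^ 2)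
    (hHbound : ∀ (z : ℝ) (x : W), αH * ‖x‖ ^ 2 ≤ ⟪H z x, x⟫ ∧ ⟪H z x, x⟫ ≤ βH * ‖x‖ ^ 2)
    (hdbound : ∀ z : ℝ, αd ≤ d z ∧ d z ≤ βd)
    (hCV : ∀ (z : ℝ), ∀ x ∈ V, C z x ∈ V) (hHV : ∀ (z : ℝ), ∀ x ∈ V, H z x ∈ V) :
    ∃ c > 0, ∀ (γ : ℝ), 0 < γ → ∀ (z : ℝ) (E₁ E₂ : W) (Q₁ Q₂ : V),
      ⟪C z (E₁ - (Q₁ : W)) - C z (E₂ - (Q₂ : W)), E₁ - E₂⟫ +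
        ⟪(C z (Q₁ : W) + H z (Q₁ : W) +
              (d z * (Real.sqrt (‖(Q₁ : W)‖ ^ 2 + 1 / γ ^ 2))⁻¹) • (Q₁ : W) -
            ((V.orthogonalProjection (C z E₁) : V) : W)) -
          (C z (Q₂ : W) + H z (Q₂ : W) +
              (d z * (Real.sqrt (‖(Q₂ : W)‖ ^ 2 + 1 / γ ^ 2))⁻¹) • (Q₂ : W) -
            ((V.orthogonalProjection (C z E₂) : V) : W)),
          (Q₁ : W) - (Q₂ : W)⟫
        ≥ c * (‖E₁ - E₂‖ ^ 2 + ‖(Q₁ : W) - (Q₂ : W)‖ ^ 2) := by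
  refine ⟨min αC αH / 3, by positivity, ?_⟩
  intro γ hγ z E₁ E₂ Q₁ Q₂
  set e := E₁ - E₂ with he
  set q : W := (Q₁ : W) - (Q₂ : W) with hq
  have hqV : q ∈ V := sub_mem Q₁.2 Q₂.2
  set s₁ := Real.sqrt (‖(Q₁ : W)‖ ^ 2 + 1 / γ ^ 2) with hs₁
  set s₂ := Real.sqrt (‖(Q₂ : W)‖ ^ 2 + 1 / γ ^ 2) with hs₂
  -- first component
  have expand1 : ⟪C z (E₁ - (Q₁ : W)) - C z (E₂ - (Q₂ : W)), e⟫ = ⟪C z (e - q), e⟫ := by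
    rw [← map_sub]
    congr 2
    rw [he, hq]; abel
  -- projection identity
  have hP : ((V.orthogonalProjection (C z E₁) : V) : W) -
      ((V.orthogonalProjection (C z E₂) : V) : W) =
      ((V.orthogonalProjection (C z e) : V) : W) := by
    rw [he, map_sub, map_sub, Submodule.coe_sub]
  have hPinner : ⟪((V.orthogonalProjection (C z e) : V) : W), q⟫ = ⟪C z e, q⟫ := by
    have h0 := Submodule.starProjection_inner_eq_zero (K := V) (C z e) q hqV
    rw [Submodule.starProjection_apply, inner_sub_left] at h0
    linarith
  -- second component
  have expand2 :
      ⟪(C z (Q₁ : W) + H z (Q₁ : W) + (d z * s₁⁻¹) • (Q₁ : W) -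
            ((V.orthogonalProjection (C z E₁) : V) : W)) -
          (C z (Q₂ : W) + H z (Q₂ : W) + (d z * s₂⁻¹) • (Q₂ : W) -
            ((V.orthogonalProjection (C z E₂) : V) : W)), q⟫
        = ⟪C z q, q⟫ + ⟪H z q, q⟫ +
          ⟪(d z * s₁⁻¹) • (Q₁ : W) - (d z * s₂⁻¹) • (Q₂ : W), q⟫ - ⟪C z e, q⟫ := by
    have h1 : (C z (Q₁ : W) + H z (Q₁ : W) + (d z * s₁⁻¹) • (Q₁ : W) -
            ((V.orthogonalProjection (C z E₁) : V) : W)) -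
          (C z (Q₂ : W) + H z (Q₂ : W) + (d z * s₂⁻¹) • (Q₂ : W) -
            ((V.orthogonalProjection (C z E₂) : V) : W))
        = C z q + H z q + ((d z * s₁⁻¹) • (Q₁ : W) - (d z * s₂⁻¹) • (Q₂ : W)) -
            ((V.orthogonalProjection (C z e) : V) : W) := by
      rw [← hP, hq, map_sub, map_sub]; abel
    rw [h1, inner_sub_left, inner_add_left, inner_add_left, hPinner]
  rw [expand1, expand2]
  -- monotone term nonneg
  have hmono : 0 ≤ ⟪(d z * s₁⁻¹) • (Q₁ : W) - (d z * s₂⁻¹) • (Q₂ : W), q⟫ := by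
    have key := grad_mono (1 / γ ^ 2) (by positivity) (Q₁ : W) (Q₂ : W)
    rw [← hs₁, ← hs₂] at key
    have heq : (d z * s₁⁻¹) • (Q₁ : W) - (d z * s₂⁻¹) • (Q₂ : W)
        = d z • (s₁⁻¹ • (Q₁ : W) - s₂⁻¹ • (Q₂ : W)) := by
      rw [smul_sub, mul_smul, mul_smul]
    rw [heq, real_inner_smul_left, hq]
    exact mul_nonneg (hαd.le.trans (hdbound z).1) key
  -- coercivity & square identity
  have hC := (hCbound z (e - q)).1
  have hH := (hHbound z q).1
  have hsq : ⟪C z (e - q), e - q⟫ = ⟪C z (e - q), e⟫ + ⟪C z q, q⟫ - ⟪C z e, q⟫ := by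
    simp only [inner_sub_right, inner_sub_left, map_sub]
    ring
  -- norm inequality
  have hne : ‖e‖ ≤ ‖e - q‖ + ‖q‖ := by
    calc ‖e‖ = ‖(e - q) + q‖ := by rw [sub_add_cancel]
    _ ≤ ‖e - q‖ + ‖q‖ := norm_add_le _ _
  have hne2 : ‖e‖ ^ 2 + ‖q‖ ^ 2 ≤ 3 * (‖e - q‖ ^ 2 + ‖q‖ ^ 2) := by
    nlinarith [norm_nonneg (e - q), norm_nonneg q, norm_nonneg e, sq_nonneg (‖e - q‖ - ‖q‖)]
  have hm0 : 0 < min αC αH := lt_min hαC hαH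
  have hm1 : min αC αH ≤ αC := min_le_left _ _
  have hm2 : min αC αH ≤ αH := min_le_right _ _
  have hb1 : min αC αH * ‖e - q‖ ^ 2 ≤ αC * ‖e - q‖ ^ 2 :=
    mul_le_mul_of_nonneg_right hm1 (sq_nonneg _)
  have hb2 : min αC αH * ‖q‖ ^ 2 ≤ αH * ‖q‖ ^ 2 :=
    mul_le_mul_of_nonneg_right hm2 (sq_nonneg _)
  have hb3 : min αC αH * (‖e‖ ^ 2 + ‖q‖ ^ 2) ≤ min αC αH * (3 * (‖e - q‖ ^ 2 + ‖q‖ ^ 2)) :=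
    mul_le_mul_of_nonneg_left hne2 hm0.le
  rw [ge_iff_le]
  nlinarith [hb3]
end
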